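/- arXiv:2405.15046 — 4 statements merged into one kernel-verified Lean document; each statement's English description precedes it below -/
import Mathlib

section
/- Let G be an irregular graph with degree sequence (d_1,…,d_n). If the spectral radius ρ(G) satisfies ρ(G) ≥ √((1/n)∑ d_i²) (i.e. char_ρ(G) ≥ 2), and ρ(G) equals the 2-mean of the degree sequence, and G is connected, then G is semiregular bipartite. -/
open Finset

attribute [local instance] Classical.propDecidable

def IsMaxEigenvalue {V : Type*} [Fintype V] (A : Matrix V V ℝ) (ρ : ℝ) : Prop :=
  IsGreatest {μ : ℝ | ∃ v : V → ℝ, v ≠ 0 ∧ A.mulVec v = μ • v} ρ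

noncomputable def adjMat {V : Type*} (G : SimpleGraph V) : Matrix V V ℝ :=
  Matrix.of fun v w => if G.Adj v w then 1 else 0

/-!
Write `A` for the adjacency matrix, `𝟙` for the all-ones vector and `d = A 𝟙` for the degree
vector. Every eigenvalue of the nonnegative symmetric matrix `A` lies in `[-ρ, ρ]`, so `ρ² - A²` is
positive semidefinite; the hypothesis says exactly that its quadratic form vanishes at `𝟙`, hence
`A d = A² 𝟙 = ρ² 𝟙`. Then `ρ 𝟙 + d` is a positive `ρ`-eigenvector and, by irregularity,
`x = ρ 𝟙 - d` is a nonzero `(-ρ)`-eigenvector. Perron–Frobenius arguments on the connected graph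
show that `|x|` is a positive `ρ`-eigenvector, hence `ρ 𝟙 + d = t |x|`, and that `x` changes sign
along every edge. The sign classes of `x` are the two sides, and on each of them
`ρ + d_v = ±t (d_v - ρ)` determines `d_v`.
-/

open Matrix
open scoped MatrixOrder

namespace Matrix

variable {n : Type*} [Fintype n]

lemma mem_spectrum_iff_exists_mulVec_eq_smul {K : Type*} [Field K] [DecidableEq n]
    {A : Matrix n n K} {μ : K} : μ ∈ spectrum K A ↔ ∃ v ≠ 0, A *ᵥ v = μ • v := by
  simp only [← spectrum_toLin', ← Module.End.hasEigenvalue_iff_mem_spectrum,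
    Module.End.hasEigenvalue_iff, Submodule.ne_bot_iff, Module.End.mem_eigenspace_iff,
    toLin'_apply]
  exact exists_congr fun v => and_comm

variable {A : Matrix n n ℝ}

lemma abs_mulVec_le (hA : ∀ i j, 0 ≤ A i j) (x : n → ℝ) : |A *ᵥ x| ≤ A *ᵥ |x| := by
  intro i
  calc |∑ j, A i j * x j| ≤ ∑ j, |A i j * x j| := abs_sum_le_sum_abs _ _
    _ = ∑ j, A i j * |x j| := by simp_rw [abs_mul, abs_of_nonneg (hA i _)]

lemma abs_dotProduct_mulVec_le (hA : ∀ i j, 0 ≤ A i j) (x : n → ℝ) :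
    |x ⬝ᵥ A *ᵥ x| ≤ |x| ⬝ᵥ A *ᵥ |x| :=
  calc |x ⬝ᵥ A *ᵥ x| ≤ ∑ i, |x i| * |(A *ᵥ x) i| := by
        simpa only [dotProduct, abs_mul] using abs_sum_le_sum_abs (fun i => x i * (A *ᵥ x) i) univ
    _ ≤ ∑ i, |x| i * (A *ᵥ |x|) i :=
        sum_le_sum fun i _ => mul_le_mul_of_nonneg_left (abs_mulVec_le hA x i) (abs_nonneg _)

namespace IsHermitian

variable (hA : A.IsHermitian) {ρ : ℝ}
include hA

lemma dotProduct_mulVec_comm (x y : n → ℝ) : x ⬝ᵥ A *ᵥ y = (A *ᵥ x) ⬝ᵥ y := by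
  rw [dotProduct_mulVec, ← mulVec_transpose, (isHermitian_iff_isSymm.mp hA).eq]

lemma mulVec_abs_eq_smul (hnn : ∀ i j, 0 ≤ A i j) {μ : ℝ} (hμ : |μ| = ρ) {x y : n → ℝ}
    (hy : ∀ i, 0 < y i) (hAy : A *ᵥ y = ρ • y) (hAx : A *ᵥ x = μ • x) :
    A *ᵥ |x| = ρ • |x| := by
  have hle : ρ • |x| ≤ A *ᵥ |x| := by
    intro i
    simpa [hAx, abs_mul, hμ] using abs_mulVec_le hnn x i
  have hsum : ∑ i, y i * (A *ᵥ |x| - ρ • |x|) i = 0 := by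
    change y ⬝ᵥ (A *ᵥ |x| - ρ • |x|) = 0
    rw [dotProduct_sub, hA.dotProduct_mulVec_comm, hAy, dotProduct_smul, smul_dotProduct,
      sub_self]
  have hzero := (sum_eq_zero_iff_of_nonneg fun i _ =>
    mul_nonneg (hy i).le (sub_nonneg.mpr (hle i))).mp hsum
  ext i
  have := (mul_eq_zero.mp (hzero i (mem_univ i))).resolve_left (hy i).ne'
  simpa [sub_eq_zero] using this

variable [DecidableEq n]

lemma dotProduct_mulVec_le (h : ∀ μ ∈ spectrum ℝ A, μ ≤ ρ) (x : n → ℝ) :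
    x ⬝ᵥ A *ᵥ x ≤ ρ * (x ⬝ᵥ x) := by
  have hpsd : (ρ • 1 - A).PosSemidef := by
    simpa only [le_iff, Algebra.algebraMap_eq_smul_one] using le_algebraMap_of_spectrum_le h hA
  simpa [sub_mulVec, smul_mulVec, dotProduct_sub, dotProduct_smul] using
    hpsd.dotProduct_mulVec_nonneg x

lemma neg_le_of_mem_spectrum (hnn : ∀ i j, 0 ≤ A i j) (h : ∀ μ ∈ spectrum ℝ A, μ ≤ ρ) {μ : ℝ}
    (hμ : μ ∈ spectrum ℝ A) : -ρ ≤ μ := by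
  obtain ⟨v, hv0, hv⟩ := mem_spectrum_iff_exists_mulVec_eq_smul.mp hμ
  have hpos : 0 < v ⬝ᵥ v := by simpa using dotProduct_star_self_pos_iff.mpr hv0
  have : -μ * (v ⬝ᵥ v) ≤ ρ * (v ⬝ᵥ v) :=
    calc -μ * (v ⬝ᵥ v) = -(v ⬝ᵥ A *ᵥ v) := by rw [hv, dotProduct_smul, smul_eq_mul, neg_mul]
      _ ≤ |v| ⬝ᵥ A *ᵥ |v| := (neg_le_abs _).trans (abs_dotProduct_mulVec_le hnn v)
      _ ≤ ρ * (|v| ⬝ᵥ |v|) := hA.dotProduct_mulVec_le h _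
      _ = ρ * (v ⬝ᵥ v) := by simp [dotProduct, abs_mul_abs_self]
  linarith [le_of_mul_le_mul_right this hpos]

lemma posSemidef_sq_smul_one_sub_mul_self (h : ∀ μ ∈ spectrum ℝ A, |μ| ≤ ρ) :
    (ρ ^ 2 • 1 - A * A).PosSemidef := by
  have hcfc : ρ ^ 2 • (1 : Matrix n n ℝ) - A * A = cfc (fun x => ρ ^ 2 - x * x) A := by
    rw [cfc_sub _ _, cfc_const (ρ ^ 2) A, cfc_mul _ _, cfc_id' ℝ A, Algebra.algebraMap_eq_smul_one]
  rw [← nonneg_iff_posSemidef, hcfc]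
  exact cfc_nonneg fun x hx => by nlinarith [abs_le.mp (h x hx), abs_nonneg x]

lemma mulVec_mulVec_eq_of_dotProduct_eq (h : ∀ μ ∈ spectrum ℝ A, |μ| ≤ ρ) {x : n → ℝ}
    (hx : (A *ᵥ x) ⬝ᵥ (A *ᵥ x) = ρ ^ 2 * (x ⬝ᵥ x)) : A *ᵥ (A *ᵥ x) = ρ ^ 2 • x := by
  have hzero := (hA.posSemidef_sq_smul_one_sub_mul_self h).dotProduct_mulVec_zero_iff x
  simp only [star_trivial, sub_mulVec, smul_mulVec, one_mulVec, dotProduct_sub, dotProduct_smul,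
    ← mulVec_mulVec, hA.dotProduct_mulVec_comm x, hx, smul_eq_mul, sub_self, true_iff] at hzero
  exact (sub_eq_zero.mp hzero).symm

end IsHermitian
end Matrix

lemma IsMaxEigenvalue.abs_le_of_mem_spectrum {n : Type*} [Fintype n] [DecidableEq n]
    {A : Matrix n n ℝ} {ρ : ℝ} (hρ : IsMaxEigenvalue A ρ) (hA : A.IsHermitian)
    (hnn : ∀ i j, 0 ≤ A i j) {μ : ℝ} (hμ : μ ∈ spectrum ℝ A) : |μ| ≤ ρ := by
  have hle : ∀ μ ∈ spectrum ℝ A, μ ≤ ρ := fun μ hμ =>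
    hρ.2 (mem_spectrum_iff_exists_mulVec_eq_smul.mp hμ)
  exact abs_le.mpr ⟨hA.neg_le_of_mem_spectrum hnn hle hμ, hle μ hμ⟩

lemma eq_of_add_eq_mul_sub {ρ t a b : ℝ} (hρ : ρ ≠ 0) (ha : ρ + a = t * (a - ρ))
    (hb : ρ + b = t * (b - ρ)) : a = b := by
  have ht : 1 - t ≠ 0 := fun ht => hρ (by linear_combination (ha - (a - ρ) * ht) / 2)
  exact sub_eq_zero.mp ((mul_eq_zero.mp (by linear_combination ha - hb)).resolve_left ht)

namespace SimpleGraph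

variable {V : Type*} {G : SimpleGraph V}

lemma Reachable.of_adj_closed {P : V → Prop} (hP : ∀ ⦃a b⦄, G.Adj a b → P a → P b) {u v : V}
    (h : G.Reachable u v) (hu : P u) : P v := by
  obtain ⟨p⟩ := h
  induction p with
  | nil => exact hu
  | cons hadj _ ih => exact ih (hP hadj hu)

lemma adjMat_eq_adjMatrix [DecidableRel G.Adj] : adjMat G = G.adjMatrix ℝ := by
  ext v w
  simp [adjMat, adjMatrix_apply]

variable [DecidableRel G.Adj]

lemma adjMatrix_nonneg {α : Type*} [Semiring α] [PartialOrder α] [ZeroLEOneClass α] (v w : V) :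
    0 ≤ G.adjMatrix α v w := by
  rw [adjMatrix_apply]
  split_ifs <;> simp

variable [Fintype V]

lemma adjMatrix_mulVec_one {α : Type*} [NonAssocSemiring α] :
    G.adjMatrix α *ᵥ 1 = fun v => (G.degree v : α) := by
  ext v
  simp

lemma natCast_degree_ne_smul_one [Nonempty V] (hG : ¬∃ k, G.IsRegularOfDegree k) (c : ℝ) :
    (fun v => (G.degree v : ℝ)) ≠ c • 1 := by
  intro h
  have hc (v : V) : (G.degree v : ℝ) = c := by simpa using congrFun h v
  obtain ⟨v₀⟩ := ‹Nonempty V›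
  exact hG ⟨G.degree v₀, fun v => by exact_mod_cast (hc v).trans (hc v₀).symm⟩

lemma pos_of_sq_mul_card_eq_sum_sq (hG : ¬∃ k, G.IsRegularOfDegree k) {ρ : ℝ} (hρ : 0 ≤ ρ)
    (hsq : ρ ^ 2 * Fintype.card V = ∑ v, (G.degree v : ℝ) ^ 2) : 0 < ρ := by
  refine hρ.lt_of_ne fun h₀ => hG ⟨0, fun v => ?_⟩
  have := (sum_eq_zero_iff_of_nonneg fun v _ => sq_nonneg (G.degree v : ℝ)).mp
    (by rw [← hsq, ← h₀]; ring) v (mem_univ _)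
  exact_mod_cast pow_eq_zero_iff two_ne_zero |>.mp this

lemma exists_degree_eq_of_forall_add_eq_mul_sub {ρ ε : ℝ} (hρ : ρ ≠ 0) {S : Set V}
    (h : ∀ v ∈ S, ρ + G.degree v = ε * (G.degree v - ρ)) : ∃ a : ℕ, ∀ v ∈ S, G.degree v = a := by
  rcases S.eq_empty_or_nonempty with rfl | ⟨w, hw⟩
  · exact ⟨0, by simp⟩
  · exact ⟨G.degree w, fun v hv =>
      Nat.cast_injective (R := ℝ) (eq_of_add_eq_mul_sub hρ (h v hv) (h w hw))⟩

lemma exists_degree_eq_on_sign_classes {ρ t : ℝ} (hρ : ρ ≠ 0)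
    (ht : ρ • 1 + (fun v => (G.degree v : ℝ)) = t • |ρ • 1 - fun v => (G.degree v : ℝ)|) :
    (∃ a : ℕ, ∀ v ∈ {v | ρ < G.degree v}, G.degree v = a) ∧
      ∃ b : ℕ, ∀ v ∈ {v | ρ < G.degree v}ᶜ, G.degree v = b := by
  refine ⟨exists_degree_eq_of_forall_add_eq_mul_sub (ε := t) hρ fun v hv => ?_,
    exists_degree_eq_of_forall_add_eq_mul_sub (ε := -t) hρ fun v hv => ?_⟩ <;>
  · have := congrFun ht v
    simp only [Set.mem_ofPred_eq, Set.mem_compl_iff, not_lt] at hv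
    simp only [Pi.add_apply, Pi.smul_apply, Pi.one_apply, smul_eq_mul, mul_one, Pi.abs_apply,
      Pi.sub_apply] at this
    rcases abs_cases (ρ - G.degree v) with ⟨h, _⟩ | ⟨h, _⟩ <;> rw [h] at this <;> linarith

lemma adjMatrix_mulVec_degree_eq [DecidableEq V] {ρ : ℝ} (hρ : IsMaxEigenvalue (G.adjMatrix ℝ) ρ)
    (hsq : ρ ^ 2 * Fintype.card V = ∑ v, (G.degree v : ℝ) ^ 2) :
    G.adjMatrix ℝ *ᵥ (fun v => (G.degree v : ℝ)) = ρ ^ 2 • 1 := by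
  rw [← adjMatrix_mulVec_one]
  refine (G.isHermitian_adjMatrix ℝ).mulVec_mulVec_eq_of_dotProduct_eq
    (fun μ hμ => hρ.abs_le_of_mem_spectrum (G.isHermitian_adjMatrix ℝ) adjMatrix_nonneg hμ) ?_
  simp [dotProduct, ← sq, hsq]

variable {f g x : V → ℝ} {c : ℝ}

lemma adjMatrix_mulVec_apply_eq_zero_iff (hf : 0 ≤ f) (u : V) :
    (G.adjMatrix ℝ *ᵥ f) u = 0 ↔ ∀ v, G.Adj u v → f v = 0 := by
  rw [adjMatrix_mulVec_apply, sum_eq_zero_iff_of_nonneg fun v _ => hf v]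
  simp

lemma Connected.eq_zero_of_adjMatrix_mulVec_eq_smul (hG : G.Connected) (hf : 0 ≤ f)
    (hAf : G.adjMatrix ℝ *ᵥ f = c • f) {u : V} (hu : f u = 0) : f = 0 := by
  funext v
  refine (hG u v).of_adj_closed (P := fun v => f v = 0) (fun a b hab ha => ?_) hu
  have hAfa : (G.adjMatrix ℝ *ᵥ f) a = 0 := by rw [hAf, Pi.smul_apply, ha, smul_zero]
  exact (adjMatrix_mulVec_apply_eq_zero_iff hf a).mp hAfa b hab

lemma Connected.pos_of_adjMatrix_mulVec_eq_smul (hG : G.Connected) (hf : 0 ≤ f) (hf₀ : f ≠ 0)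
    (hAf : G.adjMatrix ℝ *ᵥ f = c • f) (v : V) : 0 < f v :=
  (hf v).lt_of_ne fun h => hf₀ (hG.eq_zero_of_adjMatrix_mulVec_eq_smul hf hAf h.symm)

lemma Connected.exists_eq_smul_of_adjMatrix_mulVec_eq_smul (hG : G.Connected)
    (hg : ∀ v, 0 < g v) (hAf : G.adjMatrix ℝ *ᵥ f = c • f) (hAg : G.adjMatrix ℝ *ᵥ g = c • g) :
    ∃ t : ℝ, f = t • g := by
  have := hG.nonempty
  obtain ⟨v₀, -, hv₀⟩ := exists_min_image univ (fun v => f v / g v) univ_nonempty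
  set t := f v₀ / g v₀
  have hz : 0 ≤ f - t • g := fun v => by
    simpa [sub_nonneg] using (le_div_iff₀ (hg v)).mp (hv₀ v (mem_univ v))
  have hAz : G.adjMatrix ℝ *ᵥ (f - t • g) = c • (f - t • g) := by
    rw [mulVec_sub, mulVec_smul, hAf, hAg, smul_sub, smul_comm]
  have hz₀ : (f - t • g) v₀ = 0 := by simp [t, div_mul_cancel₀ _ (hg v₀).ne']
  exact ⟨t, sub_eq_zero.mp (hG.eq_zero_of_adjMatrix_mulVec_eq_smul hz hAz hz₀)⟩

lemma nonneg_of_adj_of_neg (hAx : G.adjMatrix ℝ *ᵥ x = -c • x)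
    (habs : G.adjMatrix ℝ *ᵥ |x| = c • |x|) {u v : V} (huv : G.Adj u v) (hu : x u < 0) :
    0 ≤ x v := by
  have hm : G.adjMatrix ℝ *ᵥ (|x| - x) = c • (|x| + x) := by
    rw [mulVec_sub, habs, hAx]
    module
  have hmu : (G.adjMatrix ℝ *ᵥ (|x| - x)) u = 0 := by
    rw [hm]
    simp [abs_of_neg hu]
  have := (adjMatrix_mulVec_apply_eq_zero_iff (fun w => by simp [le_abs_self]) u).mp hmu v huv
  simpa [sub_eq_zero] using this

lemma neg_iff_not_neg_of_adj (hAx : G.adjMatrix ℝ *ᵥ x = -c • x)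
    (habs : G.adjMatrix ℝ *ᵥ |x| = c • |x|) (hx : ∀ v, x v ≠ 0) {u v : V} (huv : G.Adj u v) :
    x u < 0 ↔ ¬ x v < 0 := by
  refine ⟨fun hu => not_lt.mpr (nonneg_of_adj_of_neg hAx habs huv hu), fun hv => ?_⟩
  have hv' : (-x) v < 0 := by simpa using (not_lt.mp hv).lt_of_ne (hx v).symm
  have hAnx : G.adjMatrix ℝ *ᵥ (-x) = -c • -x := by
    rw [mulVec_neg, hAx]
    module
  have := nonneg_of_adj_of_neg hAnx (by rwa [abs_neg]) huv.symm hv'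
  exact (by simpa using this : x u ≤ 0).lt_of_ne (hx u)

lemma Connected.exists_eq_smul_abs_of_neg_eigenvector (hG : G.Connected) {y : V → ℝ} (hc : 0 ≤ c)
    (hy : ∀ v, 0 < y v) (hAy : G.adjMatrix ℝ *ᵥ y = c • y)
    (hAx : G.adjMatrix ℝ *ᵥ x = -c • x) (hx : x ≠ 0) :
    (∃ t : ℝ, y = t • |x|) ∧ ∀ ⦃u v : V⦄, G.Adj u v → (x u < 0 ↔ ¬ x v < 0) := by
  have habs := (G.isHermitian_adjMatrix ℝ).mulVec_abs_eq_smul adjMatrix_nonneg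
    (by rw [abs_neg, abs_of_nonneg hc]) hy hAy hAx
  have hxpos := hG.pos_of_adjMatrix_mulVec_eq_smul (abs_nonneg x) (by simpa using hx) habs
  exact ⟨hG.exists_eq_smul_of_adjMatrix_mulVec_eq_smul hxpos hAy habs,
    fun u v => neg_iff_not_neg_of_adj hAx habs (fun v => abs_pos.mp (hxpos v))⟩

end SimpleGraph

theorem stmt13_general {V : Type*} [Fintype V] (G : SimpleGraph V)
    (hirr : ¬∃ d : ℕ, G.IsRegularOfDegree d) (hconn : G.Connected)
    (ρ : ℝ) (hρ : IsMaxEigenvalue (adjMat G) ρ)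
    (heq : ρ = Real.sqrt ((1 / (Fintype.card V : ℝ)) * ∑ v, (G.degree v : ℝ) ^ 2)) :
    ∃ (s : Set V) (a b : ℕ),
      (∀ ⦃v w : V⦄, G.Adj v w → (v ∈ s ↔ w ∉ s)) ∧
      (∀ v ∈ s, G.degree v = a) ∧ (∀ v, v ∉ s → G.degree v = b) := by
  have := hconn.nonempty
  rw [SimpleGraph.adjMat_eq_adjMatrix] at hρ
  have hsq : ρ ^ 2 * Fintype.card V = ∑ v, (G.degree v : ℝ) ^ 2 := by
    rw [heq, Real.sq_sqrt (by positivity)]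
    field_simp
  have hρ₀ := G.pos_of_sq_mul_card_eq_sum_sq hirr (heq ▸ Real.sqrt_nonneg _) hsq
  have hAd := SimpleGraph.adjMatrix_mulVec_degree_eq hρ hsq
  set d : V → ℝ := fun v => G.degree v
  have hAx : G.adjMatrix ℝ *ᵥ (ρ • 1 - d) = -ρ • (ρ • 1 - d) := by
    rw [mulVec_sub, mulVec_smul, SimpleGraph.adjMatrix_mulVec_one, hAd]
    module
  have hAy : G.adjMatrix ℝ *ᵥ (ρ • 1 + d) = ρ • (ρ • 1 + d) := by
    rw [mulVec_add, mulVec_smul, SimpleGraph.adjMatrix_mulVec_one, hAd]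
    module
  obtain ⟨⟨t, ht⟩, hflip⟩ := hconn.exists_eq_smul_abs_of_neg_eigenvector hρ₀.le
    (fun v => by simpa using add_pos_of_pos_of_nonneg hρ₀ (Nat.cast_nonneg (G.degree v))) hAy hAx
    (sub_ne_zero.mpr (G.natCast_degree_ne_smul_one hirr ρ).symm)
  obtain ⟨⟨a, ha⟩, b, hb⟩ := G.exists_degree_eq_on_sign_classes hρ₀.ne' ht
  refine ⟨{v | ρ < G.degree v}, a, b, fun v w hvw => ?_, ha, hb⟩
  simpa [d, sub_neg] using hflip hvw

/-- If `G` is a connected irregular graph whose spectral radius is at least the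
2-mean of its degree sequence and in fact equals it, then `G` is semiregular
bipartite. -/
theorem stmt13 {V : Type*} [Fintype V] (G : SimpleGraph V)
    (hirr : ¬∃ d : ℕ, G.IsRegularOfDegree d) (hconn : G.Connected)
    (ρ : ℝ) (hρ : IsMaxEigenvalue (adjMat G) ρ)
    (hge : Real.sqrt ((1 / (Fintype.card V : ℝ)) * ∑ v, (G.degree v : ℝ) ^ 2) ≤ ρ)
    (heq : ρ = Real.sqrt ((1 / (Fintype.card V : ℝ)) * ∑ v, (G.degree v : ℝ) ^ 2)) :
    ∃ (s : Set V) (a b : ℕ),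
      (∀ ⦃v w : V⦄, G.Adj v w → (v ∈ s ↔ w ∉ s)) ∧
      (∀ v ∈ s, G.degree v = a) ∧ (∀ v, v ∉ s → G.degree v = b) :=
  stmt13_general G hirr hconn ρ hρ heq
end

section
/- For every even integer n ≥ 4 and every integer k ≥ 1, the following inequality holds: (n−3−k)·n²/4 + (2+k)·(n/2 − 1)² + (n/2 + k)² > n·((n − 2 + √(n² + 4n − 12))/4)². -/
/-- For every even integer `n ≥ 4` and every integer `k ≥ 1`,
`(n−3−k)·n²/4 + (2+k)(n/2 − 1)² + (n/2 + k)² > n·((n − 2 + √(n² + 4n − 12))/4)²`. -/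
theorem stmt15 (n k : ℕ) (hn : Even n) (hn4 : 4 ≤ n) (hk : 1 ≤ k) :
    ((n : ℝ) - 3 - k) * (n : ℝ) ^ 2 / 4 + (2 + (k : ℝ)) * ((n : ℝ) / 2 - 1) ^ 2
        + ((n : ℝ) / 2 + k) ^ 2
      > (n : ℝ) * (((n : ℝ) - 2 + Real.sqrt ((n : ℝ) ^ 2 + 4 * n - 12)) / 4) ^ 2 := by
  have hn' : (4 : ℝ) ≤ n := by exact_mod_cast hn4
  have hk' : (1 : ℝ) ≤ k := by exact_mod_cast hk
  have hD : (0 : ℝ) ≤ (n : ℝ) ^ 2 + 4 * n - 12 := by nlinarith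
  set s := Real.sqrt ((n : ℝ) ^ 2 + 4 * n - 12) with hs
  have hs0 : 0 ≤ s := Real.sqrt_nonneg _
  have hs2 : s ^ 2 = (n : ℝ) ^ 2 + 4 * n - 12 := Real.sq_sqrt hD
  have hA : (0 : ℝ) < (n : ℝ) ^ 3 - 10 * n + 32 := by nlinarith
  have hsq : ((n : ℝ) * ((n : ℝ) - 2) * s) ^ 2 < ((n : ℝ) ^ 3 - 10 * n + 32) ^ 2 := by
    nlinarith [hs2, sq_nonneg (n : ℝ), sq_nonneg ((n : ℝ) - 4)]
  have key : (n : ℝ) * ((n : ℝ) - 2) * s < (n : ℝ) ^ 3 - 10 * n + 32 :=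
    lt_of_pow_lt_pow_left₀ 2 hA.le hsq
  have hns2 : (n : ℝ) * s ^ 2 = (n : ℝ) * ((n : ℝ) ^ 2 + 4 * n - 12) := by rw [hs2]
  nlinarith [key, hns2, sq_nonneg ((k : ℝ) - 1)]
end

section
/- Let G be the join G_{n−2p−2}² ∨ G_{2p+2}³, where G_m^r denotes an (m−r)-regular graph on m vertices, for even n ≥ 6 and 1 ≤ p ≤ (n−4)/2. Then the partition of V(G) into the two join factors is equitable with quotient matrix [[n−2p−4, 2p+2],[n−2p−2, 2p−1]], and the spectral radius of G equals (n − 5 + √((n+1)² − 8p − 8))/2. -/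
open Finset

attribute [local instance] Classical.propDecidable

/-- The join of two vertex-disjoint graphs: all edges between them are added. -/
def join {α β : Type*} (G : SimpleGraph α) (H : SimpleGraph β) : SimpleGraph (α ⊕ β) where
  Adj x y :=
    match x, y with
    | Sum.inl a, Sum.inl b => G.Adj a b
    | Sum.inr a, Sum.inr b => H.Adj a b
    | Sum.inl _, Sum.inr _ => True
    | Sum.inr _, Sum.inl _ => True
  symm := by
    constructor
    rintro (a | a) (b | b) h
    · exact G.symm.symm _ _ h
    · trivial
    · trivial
    · exact H.symm.symm _ _ h
  loopless := by
    constructor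
    rintro (a | a) h
    · exact G.loopless.irrefl a h
    · exact H.loopless.irrefl a h

/-! The partition into the two join factors is equitable with quotient matrix
`Q = [[d₁, |β|], [|α|, d₂]]`, so the vector equal to `|β|` on the first factor and to `ρ - d₁` on
the second is an eigenvector of the adjacency matrix for the larger eigenvalue `ρ` of `Q`; it is
positive because `ρ > d₁`. A symmetric nonnegative matrix with a positive eigenvector `w` for `ρ`
has no eigenvalue above `ρ`: for `A v = μ v` one has `|μ| |v| ≤ A |v|` entrywise, and pairing with
`w` gives `|μ| ⟪w, |v|⟫ ≤ ρ ⟪w, |v|⟫`. -/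

open Matrix

theorem abs_le_of_mulVec_eq_smul_of_vecMul_eq_smul {V : Type*} [Fintype V] {A : Matrix V V ℝ}
    (hA : ∀ i j, 0 ≤ A i j) {w : V → ℝ} (hw : ∀ i, 0 < w i) {ρ : ℝ} (hwA : w ᵥ* A = ρ • w)
    {μ : ℝ} {v : V → ℝ} (hv : v ≠ 0) (hAv : A *ᵥ v = μ • v) : |μ| ≤ ρ := by
  set u : V → ℝ := fun i => |v i|
  have hu : ∀ i, |μ| * u i ≤ (A *ᵥ u) i := fun i => calc
      |μ| * u i = |(A *ᵥ v) i| := by simp [u, hAv, abs_mul]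
      _ ≤ ∑ j, |A i j * v j| := abs_sum_le_sum_abs _ _
      _ = (A *ᵥ u) i := by simp [mulVec, dotProduct, abs_mul, abs_of_nonneg (hA i _), u]
  have hwu : 0 < w ⬝ᵥ u := by
    obtain ⟨i, hi⟩ := Function.ne_iff.mp hv
    exact sum_pos' (fun j _ => mul_nonneg (hw j).le (abs_nonneg _))
      ⟨i, mem_univ _, mul_pos (hw i) (abs_pos.mpr hi)⟩
  refine le_of_mul_le_mul_right ?_ hwu
  calc |μ| * (w ⬝ᵥ u) = w ⬝ᵥ (|μ| • u) := by rw [dotProduct_smul, smul_eq_mul]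
    _ ≤ w ⬝ᵥ (A *ᵥ u) := sum_le_sum fun i _ => mul_le_mul_of_nonneg_left (hu i) (hw i).le
    _ = ρ * (w ⬝ᵥ u) := by rw [dotProduct_mulVec, hwA, smul_dotProduct, smul_eq_mul]

theorem isMaxEigenvalue_of_pos_eigenvector {V : Type*} [Fintype V] [Nonempty V]
    {A : Matrix V V ℝ} (hsymm : A.IsSymm) (hA : ∀ i j, 0 ≤ A i j) {w : V → ℝ}
    (hw : ∀ i, 0 < w i) {ρ : ℝ} (hAw : A *ᵥ w = ρ • w) : IsMaxEigenvalue A ρ := by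
  refine ⟨⟨w, fun h => (hw (Classical.arbitrary V)).ne' (congrFun h _), hAw⟩, ?_⟩
  rintro μ ⟨v, hv, hAv⟩
  have hwA : w ᵥ* A = ρ • w := by rw [← mulVec_transpose, hsymm.eq, hAw]
  exact (le_abs_self μ).trans (abs_le_of_mulVec_eq_smul_of_vecMul_eq_smul hA hw hwA hv hAv)

theorem adjMat_isSymm {V : Type*} (G : SimpleGraph V) : (adjMat G).IsSymm := by
  ext v w
  simp [adjMat, G.adj_comm]

theorem adjMat_nonneg {V : Type*} (G : SimpleGraph V) (v w : V) : 0 ≤ adjMat G v w := by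
  by_cases h : G.Adj v w <;> simp [adjMat, h]

theorem SimpleGraph.IsRegularOfDegree.card_filter_adj {V : Type*} [Fintype V]
    {G : SimpleGraph V} {d : ℕ} (hG : G.IsRegularOfDegree d) (v : V) :
    #{w | G.Adj v w} = d := by
  rw [← hG v, ← card_neighborFinset_eq_degree, neighborFinset_eq_filter]

section join

variable {α β : Type*} {G : SimpleGraph α} {H : SimpleGraph β}

@[simp] theorem join_adj_inl_inl {a b : α} : (join G H).Adj (.inl a) (.inl b) ↔ G.Adj a b :=
  Iff.rfl

@[simp] theorem join_adj_inr_inr {a b : β} : (join G H).Adj (.inr a) (.inr b) ↔ H.Adj a b :=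
  Iff.rfl

@[simp] theorem join_adj_inl_inr {a : α} {b : β} : (join G H).Adj (.inl a) (.inr b) :=
  trivial

@[simp] theorem join_adj_inr_inl {a : β} {b : α} : (join G H).Adj (.inr a) (.inl b) :=
  trivial

theorem adjMat_join_mulVec_sumElim [Fintype α] [Fintype β] {d₁ d₂ : ℕ}
    (hG : G.IsRegularOfDegree d₁) (hH : H.IsRegularOfDegree d₂) (x y : ℝ) :
    adjMat (join G H) *ᵥ Sum.elim (fun _ => x) (fun _ => y) =
      Sum.elim (fun _ => d₁ * x + Fintype.card β * y) (fun _ => Fintype.card α * x + d₂ * y) := by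
  ext (a | a) <;>
    simp only [mulVec, dotProduct, adjMat, of_apply, Fintype.sum_sum_type, join_adj_inl_inl,
      join_adj_inr_inr, join_adj_inl_inr, join_adj_inr_inl, Sum.elim_inl, Sum.elim_inr] <;>
    simp [sum_ite, hG.card_filter_adj, hH.card_filter_adj]

end join

/-- The larger eigenvalue of `[[a, b], [c, d]]` when `b c ≥ 0`. -/
noncomputable def perronRoot (a b c d : ℝ) : ℝ :=
  (a + d + √((a - d) ^ 2 + 4 * b * c)) / 2

theorem lt_perronRoot {a b c d : ℝ} (hbc : 0 < b * c) : a < perronRoot a b c d := by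
  have : |a - d| < √((a - d) ^ 2 + 4 * b * c) := by
    rw [← Real.sqrt_sq_eq_abs]
    exact Real.sqrt_lt_sqrt (sq_nonneg _) (by linarith)
  unfold perronRoot
  linarith [le_abs_self (a - d)]

theorem perronRoot_quadratic_eq {a b c d : ℝ} (hbc : 0 ≤ b * c) :
    perronRoot a b c d ^ 2 - (a + d) * perronRoot a b c d + (a * d - b * c) = 0 := by
  have hs := Real.sq_sqrt (show 0 ≤ (a - d) ^ 2 + 4 * b * c by nlinarith [sq_nonneg (a - d)])
  unfold perronRoot
  linear_combination hs / 4

theorem isMaxEigenvalue_adjMat_join {α β : Type*} [Fintype α] [Fintype β] [Nonempty α]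
    [Nonempty β] {G : SimpleGraph α} {H : SimpleGraph β} {d₁ d₂ : ℕ}
    (hG : G.IsRegularOfDegree d₁) (hH : H.IsRegularOfDegree d₂) :
    IsMaxEigenvalue (adjMat (join G H)) (perronRoot d₁ (Fintype.card β) (Fintype.card α) d₂) := by
  have hbc : (0 : ℝ) < Fintype.card β * Fintype.card α := by positivity
  set ρ := perronRoot d₁ (Fintype.card β) (Fintype.card α) d₂
  refine isMaxEigenvalue_of_pos_eigenvector (adjMat_isSymm _) (adjMat_nonneg _)
    (w := Sum.elim (fun _ => (Fintype.card β : ℝ)) (fun _ => ρ - d₁)) ?_ ?_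
  · rintro (_ | _)
    · exact Nat.cast_pos.2 (Fintype.card_pos (α := β))
    · exact sub_pos.2 (lt_perronRoot hbc)
  · rw [adjMat_join_mulVec_sumElim hG hH]
    ext (_ | _) <;> simp only [Sum.elim_inl, Sum.elim_inr, Pi.smul_apply, smul_eq_mul]
    · ring
    · linear_combination -perronRoot_quadratic_eq hbc.le

theorem stmt17_general (n p : ℕ) (hp1 : 1 ≤ p)
    (hp2 : 2 * p ≤ n - 4)
    (G1 : SimpleGraph (Fin (n - 2 * p - 2))) (hG1 : G1.IsRegularOfDegree (n - 2 * p - 4))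
    (G2 : SimpleGraph (Fin (2 * p + 2))) (hG2 : G2.IsRegularOfDegree (2 * p - 1)) :
    (∀ a : Fin (n - 2 * p - 2),
        (univ.filter fun b : Fin (n - 2 * p - 2) =>
          (join G1 G2).Adj (Sum.inl a) (Sum.inl b)).card = n - 2 * p - 4 ∧
        (univ.filter fun b : Fin (2 * p + 2) =>
          (join G1 G2).Adj (Sum.inl a) (Sum.inr b)).card = 2 * p + 2) ∧
      (∀ a : Fin (2 * p + 2),
        (univ.filter fun b : Fin (n - 2 * p - 2) =>
          (join G1 G2).Adj (Sum.inr a) (Sum.inl b)).card = n - 2 * p - 2 ∧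
        (univ.filter fun b : Fin (2 * p + 2) =>
          (join G1 G2).Adj (Sum.inr a) (Sum.inr b)).card = 2 * p - 1) ∧
      IsMaxEigenvalue (adjMat (join G1 G2))
        (((n : ℝ) - 5 + Real.sqrt (((n : ℝ) + 1) ^ 2 - 8 * p - 8)) / 2) := by
  refine ⟨fun x => ⟨by simpa using hG1.card_filter_adj x, by simp⟩,
    fun x => ⟨by simp, by simpa using hG2.card_filter_adj x⟩, ?_⟩
  have : Nonempty (Fin (n - 2 * p - 2)) := ⟨⟨0, by omega⟩⟩
  convert isMaxEigenvalue_adjMat_join hG1 hG2 using 1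
  simp only [perronRoot, Fintype.card_fin]
  push_cast [Nat.sub_sub, Nat.cast_sub (show 2 * p + 4 ≤ n by omega),
    Nat.cast_sub (show 2 * p + 2 ≤ n by omega), Nat.cast_sub (show 1 ≤ 2 * p by omega)]
  ring_nf

/-- For even `n ≥ 6` and `1 ≤ p ≤ (n−4)/2`, the join
`G = G²_{n−2p−2} ∨ G³_{2p+2}` of an `(n−2p−4)`-regular graph on `n−2p−2`
vertices and a `(2p−1)`-regular graph on `2p+2` vertices has the partition into
the two join factors equitable with quotient matrix
`[[n−2p−4, 2p+2], [n−2p−2, 2p−1]]`, and its spectral radius equals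
`(n − 5 + √((n+1)² − 8p − 8))/2`. -/
theorem stmt17 (n p : ℕ) (hn : Even n) (hn6 : 6 ≤ n) (hp1 : 1 ≤ p)
    (hp2 : 2 * p ≤ n - 4)
    (G1 : SimpleGraph (Fin (n - 2 * p - 2))) (hG1 : G1.IsRegularOfDegree (n - 2 * p - 4))
    (G2 : SimpleGraph (Fin (2 * p + 2))) (hG2 : G2.IsRegularOfDegree (2 * p - 1)) :
    (∀ a : Fin (n - 2 * p - 2),
        (univ.filter fun b : Fin (n - 2 * p - 2) =>
          (join G1 G2).Adj (Sum.inl a) (Sum.inl b)).card = n - 2 * p - 4 ∧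
        (univ.filter fun b : Fin (2 * p + 2) =>
          (join G1 G2).Adj (Sum.inl a) (Sum.inr b)).card = 2 * p + 2) ∧
      (∀ a : Fin (2 * p + 2),
        (univ.filter fun b : Fin (n - 2 * p - 2) =>
          (join G1 G2).Adj (Sum.inr a) (Sum.inl b)).card = n - 2 * p - 2 ∧
        (univ.filter fun b : Fin (2 * p + 2) =>
          (join G1 G2).Adj (Sum.inr a) (Sum.inr b)).card = 2 * p - 1) ∧
      IsMaxEigenvalue (adjMat (join G1 G2))
        (((n : ℝ) - 5 + Real.sqrt (((n : ℝ) + 1) ^ 2 - 8 * p - 8)) / 2) :=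
  stmt17_general n p hp1 hp2 G1 hG1 G2 hG2
end

section
/- Let n be divisible by 3 and consider the 3×3 matrix B = [[0, 2n/3 − 2, 2],[n/3, n/3 − 1, 1],[n/3, n/3 − 1, 0]]. Its characteristic polynomial is x³ + x²(1 − n/3) + x(1 − 2n²/9 − n/3) − 2n²/9 + 2n/3, and if x = (x₁,x₂,x₃) is a positive eigenvector of B for its largest eigenvalue, then x₂ > x₁ > x₃. -/
open Polynomial

set_option maxHeartbeats 1600000 in
/-- For `n` divisible by 3 (`n ≥ 6`), the matrix
`B = [[0, 2n/3 − 2, 2], [n/3, n/3 − 1, 1], [n/3, n/3 − 1, 0]]` has characteristic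
polynomial `x³ + x²(1 − n/3) + x(1 − 2n²/9 − n/3) − 2n²/9 + 2n/3`, and any
positive eigenvector `x` of `B` for its largest eigenvalue satisfies
`x₂ > x₁ > x₃`. -/
theorem stmt19 (n : ℕ) (h3 : 3 ∣ n) (h6 : 6 ≤ n) :
    (Matrix.of ![![(0 : ℝ), 2 * (n : ℝ) / 3 - 2, 2],
        ![(n : ℝ) / 3, (n : ℝ) / 3 - 1, 1],
        ![(n : ℝ) / 3, (n : ℝ) / 3 - 1, 0]]).charpoly
      = X ^ 3 + C (1 - (n : ℝ) / 3) * X ^ 2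
          + C (1 - 2 * (n : ℝ) ^ 2 / 9 - (n : ℝ) / 3) * X
          + C (-(2 * (n : ℝ) ^ 2 / 9) + 2 * (n : ℝ) / 3) ∧
      ∀ (lam : ℝ) (x : Fin 3 → ℝ),
        IsGreatest {μ : ℝ | ∃ v : Fin 3 → ℝ, v ≠ 0 ∧
            (Matrix.of ![![(0 : ℝ), 2 * (n : ℝ) / 3 - 2, 2],
              ![(n : ℝ) / 3, (n : ℝ) / 3 - 1, 1],
              ![(n : ℝ) / 3, (n : ℝ) / 3 - 1, 0]]).mulVec v = μ • v} lam →
        (Matrix.of ![![(0 : ℝ), 2 * (n : ℝ) / 3 - 2, 2],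
            ![(n : ℝ) / 3, (n : ℝ) / 3 - 1, 1],
            ![(n : ℝ) / 3, (n : ℝ) / 3 - 1, 0]]).mulVec x = lam • x →
        (∀ i, 0 < x i) → x 1 > x 0 ∧ x 0 > x 2 := by
  constructor
  · -- characteristic polynomial computation
    rw [Matrix.charpoly, Matrix.det_fin_three]
    simp [Matrix.charmatrix_apply_eq, Matrix.charmatrix_apply_ne, Matrix.vecHead, Matrix.vecTail]
    apply Polynomial.funext
    intro x
    simp [Matrix.vecHead, Matrix.vecTail]
    ring
  · intro lam x _ hx hpos
    have hE0 := congrFun hx 0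
    have hE1 := congrFun hx 1
    have hE2 := congrFun hx 2
    simp only [Matrix.mulVec, dotProduct, Fin.sum_univ_three, Matrix.of_apply,
      Matrix.cons_val', Matrix.cons_val_zero, Matrix.cons_val_one, Matrix.head_cons,
      Matrix.empty_val', Matrix.cons_val_fin_one, Matrix.head_fin_const, Pi.smul_apply,
      smul_eq_mul, Matrix.cons_val_two, Matrix.tail_cons] at hE0 hE1 hE2
    set a := x 0 with ha
    set b := x 1 with hb
    set c := x 2 with hc
    have hE0' : (2 * (n:ℝ) / 3 - 2) * b + 2 * c = lam * a := by linear_combination hE0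
    have hE1' : (n:ℝ) / 3 * a + ((n:ℝ) / 3 - 1) * b + c = lam * b := by linear_combination hE1
    have hE2' : (n:ℝ) / 3 * a + ((n:ℝ) / 3 - 1) * b = lam * c := by linear_combination hE2
    clear hE0 hE1 hE2 hx
    have hapos : 0 < a := hpos 0
    have hbpos : 0 < b := hpos 1
    have hcpos : 0 < c := hpos 2
    have hn : (6:ℝ) ≤ (n:ℝ) := by exact_mod_cast h6
    have hlam : 0 < lam := by nlinarith
    have hlb : lam * b = (lam + 1) * c := by linear_combination hE2' - hE1'
    have hna : (n:ℝ) * a = 3 * lam * c - ((n:ℝ) - 3) * b := by linear_combination 3 * hE2'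
    have hpc : (9 * lam^3 - 3*((n:ℝ)-3)*lam^2 - (2*(n:ℝ)^2+3*(n:ℝ)-9)*lam
        - (2*(n:ℝ)^2-6*(n:ℝ))) * c = 0 := by
      linear_combination (-3*(n:ℝ)*lam) * hE0' + (-3*lam*((n:ℝ)-3) - 2*(n:ℝ)*((n:ℝ)-3)) * hE1'
        + (-(9*lam^2) + 3*lam*((n:ℝ)-3) + 2*(n:ℝ)*((n:ℝ)-3)) * hE2'
    have hp : 9 * lam^3 - 3*((n:ℝ)-3)*lam^2 - (2*(n:ℝ)^2+3*(n:ℝ)-9)*lam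
        - (2*(n:ℝ)^2-6*(n:ℝ)) = 0 := by
      rcases mul_eq_zero.mp hpc with h | h
      · exact h
      · exact absurd h (ne_of_gt hcpos)
    constructor
    · by_contra hab
      push_neg at hab  -- b ≤ a
      have h1 : lam * ((n:ℝ) * b) ≤ lam * ((n:ℝ) * a) := by
        apply mul_le_mul_of_nonneg_left _ hlam.le
        nlinarith
      have h2 : lam * ((n:ℝ) * a) = 3 * lam^2 * c - ((n:ℝ)-3) * (lam+1) * c := by
        linear_combination lam * hna - ((n:ℝ)-3) * hlb
      have h3 : lam * ((n:ℝ) * b) = (n:ℝ) * (lam+1) * c := by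
        linear_combination (n:ℝ) * hlb
      have hg : 0 ≤ 3*lam^2 - (2*(n:ℝ)-3)*lam - (2*(n:ℝ)-3) := by
        have h4 : 0 * c ≤ (3*lam^2 - (2*(n:ℝ)-3)*lam - (2*(n:ℝ)-3)) * c := by nlinarith
        exact le_of_mul_le_mul_right h4 hcpos
      have key : lam * (3*lam^2 - (2*(n:ℝ)-3)*lam - (2*(n:ℝ)-3))
          + ((n:ℝ)/3) * (3*lam^2 - (2*(n:ℝ)-3)*lam - (2*(n:ℝ)-3)) + (n:ℝ) = 0 := by
        linear_combination (1/3 : ℝ) * hp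
      have k1 := mul_nonneg hlam.le hg
      have k2 := mul_nonneg (show (0:ℝ) ≤ (n:ℝ)/3 by linarith) hg
      linarith
    · by_contra hac
      push_neg at hac  -- a ≤ c
      have h1 : lam * ((n:ℝ) * a) ≤ lam * ((n:ℝ) * c) := by
        apply mul_le_mul_of_nonneg_left _ hlam.le
        nlinarith
      have h2 : lam * ((n:ℝ) * a) = 3 * lam^2 * c - ((n:ℝ)-3) * (lam+1) * c := by
        linear_combination lam * hna - ((n:ℝ)-3) * hlb
      have hs : 3*lam^2 - (2*(n:ℝ)-3)*lam - ((n:ℝ)-3) ≤ 0 := by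
        have h4 : (3*lam^2 - (2*(n:ℝ)-3)*lam - ((n:ℝ)-3)) * c ≤ 0 * c := by nlinarith
        exact le_of_mul_le_mul_right h4 hcpos
      have key : lam * (3*lam^2 - (2*(n:ℝ)-3)*lam - ((n:ℝ)-3)) - lam * (n:ℝ)
          + ((n:ℝ)/3) * (3*lam^2 - (2*(n:ℝ)-3)*lam - ((n:ℝ)-3)) - (n:ℝ)^2/3 + (n:ℝ) = 0 := by
        linear_combination (1/3 : ℝ) * hp
      have k1 : lam * (3*lam^2 - (2*(n:ℝ)-3)*lam - ((n:ℝ)-3)) ≤ 0 :=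
        mul_nonpos_iff.mpr (Or.inl ⟨hlam.le, hs⟩)
      have k2 : ((n:ℝ)/3) * (3*lam^2 - (2*(n:ℝ)-3)*lam - ((n:ℝ)-3)) ≤ 0 :=
        mul_nonpos_iff.mpr (Or.inl ⟨show (0:ℝ) ≤ (n:ℝ)/3 by linarith, hs⟩)
      have k3 : 0 ≤ lam * (n:ℝ) := mul_nonneg hlam.le (by linarith)
      nlinarith [key, k1, k2, k3, hn]
end
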